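/- Let T0 and T1 be two balanced trees such that T0 ⋌ T1 (T1 is obtained from T0 by a single right rotation). Then ht(T0) = ht(T1). -/

import Mathlib

/-!
Only the heights inside the rotated subtree change, so it suffices to rotate at the root.
With `a, b, c` the heights of `A, B, C`, the heights of `(A ∧ B) ∧ C` and `A ∧ (B ∧ C)` are
`2 + max a b (c - 1)` and `2 + max (a - 1) b c`. They differ only if `a` or `c` strictly
exceeds the other two heights, and balance at the root of `(A ∧ B) ∧ C`, resp. of
`A ∧ (B ∧ C)`, rules that out.
-/

/-- Complete rooted planar binary trees. -/
inductive BTree where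
  | leaf : BTree
  | node : BTree → BTree → BTree
  deriving DecidableEq

namespace BTree

/-- The height of a tree. -/
def ht : BTree → ℕ
  | leaf => 0
  | node l r => 1 + max l.ht r.ht

/-- The imbalance value of the root of a tree (`γ`). -/
def imb : BTree → ℤ
  | leaf => 0
  | node l r => (r.ht : ℤ) - l.ht

/-- A tree is balanced if every node has imbalance value in {-1, 0, 1}. -/
def Balanced : BTree → Prop
  | leaf => True
  | node l r =>
      ((r.ht : ℤ) - l.ht = -1 ∨ (r.ht : ℤ) - l.ht = 0 ∨ (r.ht : ℤ) - l.ht = 1) ∧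
      Balanced l ∧ Balanced r

/-- The subtree at a position (`false` = go left, `true` = go right). -/
def subtreeAt : BTree → List Bool → Option BTree
  | t, [] => some t
  | leaf, _ :: _ => none
  | node l _, false :: p => subtreeAt l p
  | node _ r, true :: p => subtreeAt r p

/-- `p` is the position of an internal node of `t`. -/
def IsNodePos (t : BTree) (p : List Bool) : Prop :=
  ∃ l r, subtreeAt t p = some (node l r)

/-- Right rotation whose root `y` is at position `p`: the subtree
`(A ∧ B) ∧ C` at `p` is replaced by `A ∧ (B ∧ C)`. -/
inductive RotAt : BTree → List Bool → BTree → Prop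
  | here (a b c : BTree) : RotAt (node (node a b) c) [] (node a (node b c))
  | left {l l' : BTree} (r : BTree) {p : List Bool} :
      RotAt l p l' → RotAt (node l r) (false :: p) (node l' r)
  | right (l : BTree) {r r' : BTree} {p : List Bool} :
      RotAt r p r' → RotAt (node l r) (true :: p) (node l r')

/-- `t₁` is obtained from `t₀` by a single right rotation (`t₀ ⋌ t₁`). -/
def Rot (t₀ t₁ : BTree) : Prop := ∃ p, RotAt t₀ p t₁

/-- The Tamari order: reflexive transitive closure of right rotation. -/
def Tamari : BTree → BTree → Prop := Relation.ReflTransGen Rot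

theorem Balanced.abs_imb_le_one {t : BTree} (h : Balanced t) : |imb t| ≤ 1 := by
  cases t with
  | leaf => simp [imb]
  | node l r =>
      obtain ⟨hlr, -, -⟩ := h
      rw [imb, abs_le]
      omega

theorem ht_node_assoc_of_imb {a b c : BTree} (h₀ : -1 ≤ imb (node (node a b) c))
    (h₁ : imb (node a (node b c)) ≤ 1) :
    ht (node (node a b) c) = ht (node a (node b c)) := by
  simp only [imb, ht] at *
  omega

theorem RotAt.ht_eq {t₀ t₁ : BTree} {p : List Bool} (hr : RotAt t₀ p t₁)
    (h₀ : Balanced t₀) (h₁ : Balanced t₁) : ht t₀ = ht t₁ := by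
  induction hr with
  | here a b c =>
      exact ht_node_assoc_of_imb (abs_le.mp h₀.abs_imb_le_one).1
        (abs_le.mp h₁.abs_imb_le_one).2
  | left r _ ih =>
      rw [ht, ht, ih h₀.2.1 h₁.2.1]
  | right l _ ih =>
      rw [ht, ht, ih h₀.2.2 h₁.2.2]

theorem ht_eq_of_rot_balanced (T0 T1 : BTree)
    (h0 : Balanced T0) (h1 : Balanced T1) (h : Rot T0 T1) :
    ht T0 = ht T1 := by
  obtain ⟨p, hp⟩ := h
  exact hp.ht_eq h0 h1

end BTree
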